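/- Let G be a bipartite simple graph on n ≥ 8 vertices. Then the Harary index of the complement of G satisfies H(Ḡ) > (5n² − 23n + 28)/(2(n − 1)). -/

import Mathlib

open Finset SimpleGraph

noncomputable section

/-- The Wiener index of a graph `G`: the sum of graph distances over all unordered pairs
of distinct vertices, i.e. half the sum over ordered pairs. -/
def wienerIndex {V : Type*} [Fintype V] (G : SimpleGraph V) : ℝ :=
  (∑ u : V, ∑ v : V, (G.dist u v : ℝ)) / 2

open Classical in
/-- The Harary index of a graph `G`: the sum of reciprocals of graph distances over all
unordered pairs of distinct vertices, where pairs in different components contribute `0`. -/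
def hararyIndex {V : Type*} [Fintype V] (G : SimpleGraph V) : ℝ :=
  (∑ u : V, ∑ v : V, if u ≠ v ∧ G.Reachable u v then ((G.dist u v : ℝ))⁻¹ else 0) / 2

/-- The distance matrix of a graph. -/
def distMatrix {V : Type*} [Fintype V] (G : SimpleGraph V) : Matrix V V ℝ :=
  fun u v => (G.dist u v : ℝ)

open Classical in
/-- The Harary (reciprocal distance) matrix of a graph. -/
def hararyMatrix {V : Type*} [Fintype V] (G : SimpleGraph V) : Matrix V V ℝ :=
  fun u v => if u ≠ v ∧ G.Reachable u v then ((G.dist u v : ℝ))⁻¹ else 0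

/-- The distance spectral radius: the largest eigenvalue of the distance matrix. -/
def distSpectralRadius {V : Type*} [Fintype V] [DecidableEq V] (G : SimpleGraph V) : ℝ :=
  sSup (spectrum ℝ (distMatrix G))

/-- The Harary spectral radius: the largest eigenvalue of the Harary matrix. -/
def hararySpectralRadius {V : Type*} [Fintype V] [DecidableEq V] (G : SimpleGraph V) : ℝ :=
  sSup (spectrum ℝ (hararyMatrix G))

/-- A graph on `n` vertices is pancyclic if it contains a cycle of every length `ℓ`
with `3 ≤ ℓ ≤ n`. -/
def Pancyclic {V : Type*} [Fintype V] (G : SimpleGraph V) : Prop :=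
  ∀ ℓ : ℕ, 3 ≤ ℓ → ℓ ≤ Fintype.card V → ∃ (v : V) (c : G.Walk v v), c.IsCycle ∧ c.length = ℓ

/-- A graph is bipartite iff it is 2-colorable. -/
def IsBipartite {V : Type*} (G : SimpleGraph V) : Prop := G.Colorable 2

/-- A graph is a complete bipartite graph if it is isomorphic to some `K_{a,b}`. -/
def IsCompleteBipartite {V : Type*} (G : SimpleGraph V) : Prop :=
  ∃ a b : ℕ, Nonempty (G ≃g completeBipartiteGraph (Fin a) (Fin b))

/-- The join `G ∨ H` of two graphs: take disjoint copies of `G` and `H` and add all edges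
between them. -/
def graphJoin {α β : Type*} (G : SimpleGraph α) (H : SimpleGraph β) : SimpleGraph (α ⊕ β) where
  Adj u v := match u, v with
    | Sum.inl u, Sum.inl v => G.Adj u v
    | Sum.inr u, Sum.inr v => H.Adj u v
    | Sum.inl _, Sum.inr _ => True
    | Sum.inr _, Sum.inl _ => True
  symm := ⟨fun u v => by
    cases u <;> cases v <;> first | exact G.adj_symm | exact H.adj_symm | exact fun _ => trivial⟩
  loopless := ⟨fun u => by cases u <;> simp⟩

/-- The family 𝒩𝒫 of exceptional graphs (on `n = Fintype.card V` vertices for the first one). -/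
def InNPFamily {V : Type*} [Fintype V] (G : SimpleGraph V) : Prop :=
  Nonempty (G ≃g graphJoin (⊤ : SimpleGraph (Fin 2))
      ((⊤ : SimpleGraph (Fin (Fintype.card V - 4))) ⊕g (⊥ : SimpleGraph (Fin 2)))) ∨
  Nonempty (G ≃g graphJoin (⊤ : SimpleGraph (Fin 5)) (⊥ : SimpleGraph (Fin 6))) ∨
  Nonempty (G ≃g graphJoin (⊤ : SimpleGraph (Fin 3))
      ((⊤ : SimpleGraph (Fin 2)) ⊕g (⊥ : SimpleGraph (Fin 3)))) ∨
  Nonempty (G ≃g graphJoin (⊤ : SimpleGraph (Fin 3))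
      (completeBipartiteGraph (Fin 1) (Fin 4) ⊕g (⊥ : SimpleGraph (Fin 1)))) ∨
  Nonempty (G ≃g graphJoin (⊤ : SimpleGraph (Fin 3))
      (completeBipartiteGraph (Fin 1) (Fin 3) ⊕g (⊤ : SimpleGraph (Fin 2)))) ∨
  Nonempty (G ≃g graphJoin (graphJoin (⊤ : SimpleGraph (Fin 2)) (⊥ : SimpleGraph (Fin 2)))
      (⊥ : SimpleGraph (Fin 5))) ∨
  Nonempty (G ≃g graphJoin (⊤ : SimpleGraph (Fin 4)) (⊥ : SimpleGraph (Fin 5))) ∨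
  Nonempty (G ≃g graphJoin (completeBipartiteGraph (Fin 1) (Fin 2)) (⊥ : SimpleGraph (Fin 4))) ∨
  Nonempty (G ≃g graphJoin (⊤ : SimpleGraph (Fin 2))
      (completeBipartiteGraph (Fin 1) (Fin 3) ⊕g (⊥ : SimpleGraph (Fin 1)))) ∨
  Nonempty (G ≃g graphJoin (⊤ : SimpleGraph (Fin 3)) (⊥ : SimpleGraph (Fin 4)))

/-! Each colour class of a bipartite graph `G` is a clique of `Gᶜ`, so `Gᶜ` has at least
`C(a, 2) + C(b, 2)` edges, where `a + b = n` are the class sizes; by Cauchy–Schwarz this is at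
least `n (n - 2) / 4`. Adjacent pairs contribute `1` to the Harary index and all other pairs
contribute `≥ 0`, so `H(Gᶜ) ≥ n (n - 2) / 4`, which exceeds the bound once `n ≥ 8`. -/

namespace SimpleGraph

variable {V : Type*} [Fintype V]

theorem card_edgeFinset_le_hararyIndex (G : SimpleGraph V) [DecidableRel G.Adj] :
    (#G.edgeFinset : ℝ) ≤ hararyIndex G := by
  have hdeg : ∀ u, (G.degree u : ℝ) = ∑ v, if G.Adj u v then 1 else 0 := by
    intro u
    rw [← card_neighborFinset_eq_degree, neighborFinset_eq_filter, Finset.sum_boole]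
  have hsum : 2 * (#G.edgeFinset : ℝ) = ∑ u, ∑ v, if G.Adj u v then 1 else 0 := by
    simp_rw [← hdeg]
    exact_mod_cast (sum_degrees_eq_twice_card_edges G).symm
  rw [hararyIndex, le_div_iff₀ two_pos, mul_comm, hsum]
  gcongr with u _ v _
  split_ifs with hadj hne hne
  · rw [dist_eq_one_iff_adj.mpr hadj]; norm_num
  · exact absurd ⟨hadj.ne, hadj.reachable⟩ hne
  · positivity
  · rfl

variable [DecidableEq V] {G : SimpleGraph V} [DecidableRel G.Adj]

theorem Coloring.card_colorClass_le_degree_compl_add_one {α : Type*} [DecidableEq α]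
    (c : G.Coloring α) (u : V) : #{v | c v = c u} ≤ Gᶜ.degree u + 1 := by
  rw [← card_neighborFinset_eq_degree,
    ← card_insert_of_notMem (Gᶜ.notMem_neighborFinset_self u)]
  refine Finset.card_le_card fun v hv => ?_
  rw [Finset.mem_filter] at hv
  rw [Finset.mem_insert, mem_neighborFinset, compl_adj]
  by_cases h : u = v
  · exact .inl h.symm
  · exact .inr ⟨h, fun hadj => c.valid hadj hv.2.symm⟩

theorem Colorable.card_sq_le_mul_card_edgeFinset_compl {k : ℕ} (hG : G.Colorable k) :
    Fintype.card V ^ 2 ≤ k * (2 * #Gᶜ.edgeFinset + Fintype.card V) := by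
  obtain ⟨c⟩ := hG
  calc Fintype.card V ^ 2 = (∑ i, #{v | c v = i}) ^ 2 := by
        rw [← card_univ, card_eq_sum_card_fiberwise (f := c) (t := univ) (by simp)]
    _ ≤ k * ∑ i, #{v | c v = i} ^ 2 := by
      simpa using sq_sum_le_card_mul_sum_sq (s := univ) (f := fun i => #{v | c v = i})
    _ = k * ∑ u, #{v | c v = c u} := by
      rw [← Finset.sum_fiberwise Finset.univ c]
      congr 1
      refine Finset.sum_congr rfl fun i _ => ?_
      rw [Finset.sum_congr rfl fun u hu => by rw [(Finset.mem_filter.mp hu).2], sq]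
      simp
    _ ≤ k * ∑ u, (Gᶜ.degree u + 1) := by
      gcongr with u
      exact c.card_colorClass_le_degree_compl_add_one u
    _ = k * (2 * #Gᶜ.edgeFinset + Fintype.card V) := by
      rw [Finset.sum_add_distrib, sum_degrees_eq_twice_card_edges]; simp

end SimpleGraph

/-- For a bipartite simple graph `G` on `n ≥ 8` vertices,
`H(Ḡ) > (5n² − 23n + 28)/(2(n − 1))`. -/
theorem harary_compl_gt_of_bipartite {V : Type*} [Fintype V] (G : SimpleGraph V) (n : ℕ)
    (hn : Fintype.card V = n) (h8 : 8 ≤ n) (hbip : _root_.IsBipartite G) :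
    hararyIndex Gᶜ > (5 * (n : ℝ) ^ 2 - 23 * n + 28) / (2 * ((n : ℝ) - 1)) := by
  classical
  have hE : (n : ℝ) ^ 2 ≤ 2 * (2 * #Gᶜ.edgeFinset + n) := by
    exact_mod_cast hn ▸ Colorable.card_sq_le_mul_card_edgeFinset_compl hbip
  have hn8 : (8 : ℝ) ≤ n := by exact_mod_cast h8
  calc (5 * (n : ℝ) ^ 2 - 23 * n + 28) / (2 * ((n : ℝ) - 1)) < n * (n - 2) / 4 := by
        rw [div_lt_div_iff₀ (by linarith) (by norm_num)]
        -- n (n - 2) (n - 1) - 2 (5 n² - 23 n + 28) = (n - 8) (n² - 5 n + 8) + 8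
        nlinarith [mul_nonneg (sub_nonneg.mpr hn8) (by nlinarith : (0 : ℝ) ≤ n ^ 2 - 5 * n + 8)]
    _ ≤ #Gᶜ.edgeFinset := by linarith
    _ ≤ hararyIndex Gᶜ := card_edgeFinset_le_hararyIndex Gᶜ
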